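/- Let D ∈ (0,1), h ∈ SR_{1−D}, and set f(x) := x·h(1/x). Let (l_j)_{j≥1} be a fractal string whose packing defect δ(x) = ∑_{j=1}^∞ {l_j x} satisfies δ(x) ≍ f(x) as x → ∞. Then the string counting function J(ε) = #{ j : l_j > ε } satisfies J(1/x) ≍ f(x) as x → ∞. -/

import Mathlib

/-!
Let `δ` be the packing defect, `J` the counting function and `f x = x * h (1 / x)`, which varies
regularly at infinity with index `D = 1 - ρ ∈ (0, 1)`.

Lower bound: `2{y} ≤ {2y} + 1`, with `2{y} = {2y}` for `0 ≤ y ≤ 1/4`, so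
`2δ(z) ≤ δ(2z) + J(1/(4z))` and, iterating, `δ(x) ≤ 2⁻ⁿ δ(2ⁿx) + J(1/(2ⁿ⁺¹x))`. As
`2⁻ⁿ f(2ⁿx) ≈ 2^(-nρ) f(x)` and `ρ > 0`, for large `n` the first term is at most `δ(x)/2`, so
`J(1/(2ⁿ⁺¹x)) ≳ f(x)`.

Upper bound: the lengths in `(1/x, 2/x]` have `{l x/4} ≥ 1/4`, so
`J(1/x) ≤ 4δ(x/4) + J(2/x) ≲ f(x) + J(2/x)`. Since `f(x/2) ≤ r f(x)` for some `r < 1` (as `ρ < 1`),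
a bound `J(1/x) ≤ M f(x)` on one block `[X, 2X]`, where `f` is continuous and positive, propagates
to all `x ≥ X`.
-/

open Filter MeasureTheory Metric Set Topology

noncomputable section

def RegVaryAtZero (h : ℝ → ℝ) (ρ : ℝ) : Prop :=
  Measurable (fun y : Set.Ioi (0:ℝ) => h y) ∧
    ∀ t : ℝ, 0 < t →
      Tendsto (fun y => h (t * y) / h y) (𝓝[>] (0:ℝ)) (𝓝 (t ^ ρ))

def SmoothVaryAtZero (h : ℝ → ℝ) (ρ : ℝ) : Prop :=
  RegVaryAtZero h ρ ∧ ∃ y₁ > (0:ℝ), ContDiffOn ℝ 1 h (Set.Ioc 0 y₁)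

def packingDefect (l : ℕ → ℝ) (x : ℝ) : ℝ := ∑' j, Int.fract (l j * x)

def stringCount (l : ℕ → ℝ) (ε : ℝ) : ℕ := {j | ε < l j}.ncard

section FractalString

variable {l : ℕ → ℝ}

lemma finite_setOf_lt_of_tendsto_zero (hl : Tendsto l atTop (𝓝 0)) {ε : ℝ} (hε : 0 < ε) :
    {j | ε < l j}.Finite := by
  have : ∀ᶠ j in cofinite, l j ≤ ε := by
    rw [Nat.cofinite_eq_atTop]
    exact hl.eventually (eventually_le_nhds hε)
  simpa using eventually_cofinite.1 this

lemma stringCount_le_of_le (hl : Tendsto l atTop (𝓝 0)) {ε ε' : ℝ} (hε : 0 < ε) (hεε' : ε ≤ ε') :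
    stringCount l ε' ≤ stringCount l ε :=
  ncard_le_ncard (fun _ hj => hεε'.trans_lt hj) (finite_setOf_lt_of_tendsto_zero hl hε)

lemma summable_fract_mul (hl : ∀ j, 0 ≤ l j) (hsum : Summable l) {x : ℝ} (hx : 0 ≤ x) :
    Summable fun j => Int.fract (l j * x) := by
  refine (hsum.mul_right x).of_nonneg_of_le (fun _ => Int.fract_nonneg _) fun j => ?_
  rw [← Int.self_sub_floor]
  have : (0 : ℝ) ≤ ⌊l j * x⌋ := by exact_mod_cast Int.floor_nonneg.2 (mul_nonneg (hl j) hx)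
  linarith

lemma two_mul_fract_le (y : ℝ) (hy : 0 ≤ y) :
    2 * Int.fract y ≤ Int.fract (2 * y) + if 1 / 4 < y then 1 else 0 := by
  split_ifs with hy4
  · simpa [two_mul] using Int.fract_add_fract_le y y
  · rw [Int.fract_eq_self.2 ⟨hy, by linarith⟩, Int.fract_eq_self.2 ⟨by linarith, by linarith⟩]
    simp

lemma two_mul_packingDefect_le (hl : ∀ j, 0 ≤ l j) (hsum : Summable l) {z : ℝ} (hz : 0 < z) :
    2 * packingDefect l z ≤ packingDefect l (2 * z) + stringCount l (1 / (4 * z)) := by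
  set S := {j | 1 / (4 * z) < l j}
  have hS : S.Finite := finite_setOf_lt_of_tendsto_zero hsum.tendsto_atTop_zero (by positivity)
  have hmem : ∀ j, (1 / 4 < l j * z ↔ j ∈ S) := fun j => by
    rw [mem_ofPred_eq, div_lt_iff₀ (by positivity : (0 : ℝ) < 4 * z)]
    constructor <;> intro h <;> linarith
  have hind : Summable (S.indicator fun _ => (1 : ℝ)) :=
    summable_of_hasFiniteSupport (hS.subset support_indicator_subset)
  calc 2 * packingDefect l z
      ≤ ∑' j, (Int.fract (l j * (2 * z)) + S.indicator (fun _ => (1 : ℝ)) j) := by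
        rw [packingDefect, ← tsum_mul_left]
        refine (summable_fract_mul hl hsum hz.le).mul_left 2 |>.tsum_le_tsum (fun j => ?_)
          ((summable_fract_mul hl hsum (by positivity)).add hind)
        have := two_mul_fract_le (l j * z) (mul_nonneg (hl j) hz.le)
        rw [mul_left_comm] at this
        simpa only [Set.indicator, ← hmem j] using this
    _ = packingDefect l (2 * z) + stringCount l (1 / (4 * z)) := by
        rw [(summable_fract_mul hl hsum (by positivity)).tsum_add hind, ← tsum_subtype]
        simp [packingDefect, stringCount, S]

lemma pow_two_mul_packingDefect_le (hl : ∀ j, 0 ≤ l j) (hsum : Summable l) (n : ℕ) {z : ℝ}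
    (hz : 0 < z) :
    2 ^ n * packingDefect l z ≤
      packingDefect l (2 ^ n * z) + (2 ^ n - 1) * stringCount l (1 / (2 ^ (n + 1) * z)) := by
  induction n with
  | zero => simp
  | succ n ih =>
    have hdouble := two_mul_packingDefect_le hl hsum (by positivity : 0 < 2 ^ n * z)
    have hanti : (stringCount l (1 / (2 ^ (n + 1) * z)) : ℝ) ≤
        stringCount l (1 / (2 ^ (n + 2) * z)) := by
      exact_mod_cast stringCount_le_of_le hsum.tendsto_atTop_zero (by positivity)
        (one_div_le_one_div_of_le (by positivity) (by gcongr <;> norm_num))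
    have h1 : (1 : ℝ) ≤ 2 ^ n := one_le_pow₀ (by norm_num)
    rw [← mul_assoc, ← pow_succ', show 4 * (2 ^ n * z) = 2 ^ (n + 2) * z by ring] at hdouble
    rw [show (2 : ℝ) ^ (n + 1) * packingDefect l z = 2 * (2 ^ n * packingDefect l z) by ring,
      show (2 : ℝ) ^ (n + 1) - 1 = 1 + 2 * (2 ^ n - 1) by ring]
    nlinarith [mul_le_mul_of_nonneg_left hanti (by linarith : (0 : ℝ) ≤ 2 * (2 ^ n - 1))]

lemma stringCount_le_packingDefect_add (hl : ∀ j, 0 ≤ l j) (hsum : Summable l) {x : ℝ}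
    (hx : 0 < x) :
    (stringCount l (1 / x) : ℝ) ≤ 4 * packingDefect l (x / 4) + stringCount l (1 / (x / 2)) := by
  set B := {j | 1 / x < l j ∧ l j ≤ 1 / (x / 2)}
  have hB : B.Finite := (finite_setOf_lt_of_tendsto_zero hsum.tendsto_atTop_zero
    (by positivity : (0 : ℝ) < 1 / x)).subset fun _ hj => hj.1
  have hsplit : {j | 1 / x < l j} ⊆ B ∪ {j | 1 / (x / 2) < l j} := fun j hj => by
    by_cases hj2 : l j ≤ 1 / (x / 2)
    exacts [Or.inl ⟨hj, hj2⟩, Or.inr (not_le.1 hj2)]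
  have hband : (B.ncard : ℝ) ≤ 4 * packingDefect l (x / 4) := by
    have hquarter : ∀ j ∈ hB.toFinset, 1 / 4 ≤ Int.fract (l j * (x / 4)) := fun j hj => by
      obtain ⟨hj1, hj2⟩ := hB.mem_toFinset.1 hj
      rw [div_lt_iff₀ hx] at hj1
      rw [le_div_iff₀ (by positivity)] at hj2
      rw [Int.fract_eq_self.2 ⟨mul_nonneg (hl j) (by positivity), by linarith⟩]
      linarith
    have := (Finset.card_nsmul_le_sum _ _ _ hquarter).trans
      ((summable_fract_mul hl hsum (by positivity)).sum_le_tsum hB.toFinset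
        fun _ _ => Int.fract_nonneg _)
    rw [nsmul_eq_mul, ← ncard_eq_toFinset_card B hB] at this
    rw [packingDefect]
    linarith
  calc (stringCount l (1 / x) : ℝ) ≤ B.ncard + stringCount l (1 / (x / 2)) := by
        exact_mod_cast (ncard_le_ncard hsplit (hB.union (finite_setOf_lt_of_tendsto_zero
          hsum.tendsto_atTop_zero (by positivity)))).trans (ncard_union_le _ _)
    _ ≤ 4 * packingDefect l (x / 4) + stringCount l (1 / (x / 2)) := by linarith

end FractalString

lemma forall_ge_of_dyadic_induction {P : ℝ → Prop} {X : ℝ} (hX : 0 < X)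
    (base : ∀ x ∈ Icc X (2 * X), P x) (step : ∀ x, 2 * X < x → P (x / 2) → P x) :
    ∀ x, X ≤ x → P x := by
  have key : ∀ n : ℕ, ∀ x ∈ Icc X (2 ^ (n + 1) * X), P x := by
    intro n
    induction n with
    | zero => simpa using base
    | succ n ih =>
      rintro x ⟨hXx, hxX⟩
      rcases le_or_gt x (2 * X) with hx | hx
      · exact base x ⟨hXx, hx⟩
      · refine step x hx (ih _ ⟨by linarith, ?_⟩)
        rw [pow_succ] at hxX
        linarith
  intro x hx
  obtain ⟨n, hn⟩ := pow_unbounded_of_one_lt (x / X) one_lt_two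
  refine key n x ⟨hx, ?_⟩
  rw [div_lt_iff₀ hX] at hn
  have : (2 : ℝ) ^ n * X ≤ 2 ^ (n + 1) * X := by gcongr <;> norm_num
  linarith

lemma exists_le_mul_of_dyadic_recursion {φ f : ℝ → ℝ} {X a r m : ℝ} (hX : 0 < X) (ha : 0 < a)
    (hr : r < 1) (hm : 0 < m) (hf : ∀ x ∈ Icc X (2 * X), m ≤ f x) (hf₀ : ∀ x, X ≤ x → 0 ≤ f x)
    (hφ : ∀ x ∈ Icc X (2 * X), φ x ≤ φ (2 * X))
    (hstep : ∀ x, 2 * X < x → φ x ≤ a * f x + φ (x / 2))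
    (hfr : ∀ x, 2 * X < x → f (x / 2) ≤ r * f x) :
    ∃ M > 0, ∀ x, X ≤ x → φ x ≤ M * f x := by
  set M := max (a / (1 - r)) (φ (2 * X) / m)
  have hM : 0 < M := lt_max_of_lt_left (div_pos ha (sub_pos.2 hr))
  refine ⟨M, hM, forall_ge_of_dyadic_induction hX (fun x hx => ?_) fun x hx ih => ?_⟩
  · calc φ x ≤ φ (2 * X) := hφ x hx
      _ ≤ M * m := (div_le_iff₀ hm).1 (le_max_right _ _)
      _ ≤ M * f x := by gcongr; exact hf x hx
  · have haM : a ≤ M * (1 - r) := (div_le_iff₀ (sub_pos.2 hr)).1 (le_max_left _ _)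
    have hfx := hf₀ x (by linarith)
    calc φ x ≤ a * f x + M * f (x / 2) := by linarith [hstep x hx]
      _ ≤ a * f x + M * (r * f x) := by gcongr; exact hfr x hx
      _ ≤ M * f x := by nlinarith

section RegularVariation

variable {h : ℝ → ℝ} {t L : ℝ}

lemma tendsto_ratio_one_div_atTop
    (hlim : Tendsto (fun y => h (t * y) / h y) (𝓝[>] 0) (𝓝 L)) :
    Tendsto (fun x => h (t / x) / h (1 / x)) atTop (𝓝 L) := by
  simpa [Function.comp_def, div_eq_mul_inv] using hlim.comp tendsto_inv_atTop_nhdsGT_zero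

lemma eventually_le_mul_of_tendsto_ratio (hpos : ∀ y > 0, 0 < h y)
    (hlim : Tendsto (fun y => h (t * y) / h y) (𝓝[>] 0) (𝓝 L)) {A : ℝ} (hA : L < A) :
    ∀ᶠ x in atTop, h (t / x) ≤ A * h (1 / x) := by
  filter_upwards [(tendsto_ratio_one_div_atTop hlim).eventually_lt_const hA,
    eventually_gt_atTop 0] with x hx hx₀
  exact ((div_lt_iff₀ (hpos _ (by positivity))).1 hx).le

lemma eventually_mul_le_of_tendsto_ratio (hpos : ∀ y > 0, 0 < h y)
    (hlim : Tendsto (fun y => h (t * y) / h y) (𝓝[>] 0) (𝓝 L)) {B : ℝ} (hB : B < L) :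
    ∀ᶠ x in atTop, B * h (1 / x) ≤ h (t / x) := by
  filter_upwards [(tendsto_ratio_one_div_atTop hlim).eventually_const_lt hB,
    eventually_gt_atTop 0] with x hx hx₀
  exact ((lt_div_iff₀ (hpos _ (by positivity))).1 hx).le

end RegularVariation

section Bounds

variable {l : ℕ → ℝ} {h : ℝ → ℝ} {ρ : ℝ}

lemma exists_eventually_mul_le_stringCount_pow (hl : ∀ j, 0 ≤ l j) (hsum : Summable l)
    (hρ : 0 < ρ) (hpos : ∀ y > 0, 0 < h y)
    (hrv : ∀ t > 0, Tendsto (fun y => h (t * y) / h y) (𝓝[>] 0) (𝓝 (t ^ ρ)))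
    {c C : ℝ} (hc : 0 < c) (hC : 0 < C)
    (hδ : ∀ᶠ x in atTop,
      c * (x * h (1 / x)) ≤ packingDefect l x ∧ packingDefect l x ≤ C * (x * h (1 / x))) :
    ∃ n : ℕ, ∀ᶠ x in atTop, c / 2 * (x * h (1 / x)) ≤ stringCount l (1 / (2 ^ (n + 1) * x)) := by
  obtain ⟨n, hn⟩ := exists_pow_lt_of_lt_one (by positivity : 0 < c / (2 * C))
    (Real.rpow_lt_one (by norm_num) (by norm_num : (1 / 2 : ℝ) < 1) hρ)
  rw [Real.rpow_pow_comm (by norm_num)] at hn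
  refine ⟨n, ?_⟩
  filter_upwards [hδ,
    (tendsto_id.const_mul_atTop (by positivity : (0 : ℝ) < 2 ^ n)).eventually hδ,
    eventually_le_mul_of_tendsto_ratio hpos (hrv _ (by positivity)) hn, eventually_gt_atTop 0]
    with x hδx hδnx hsmall hx
  have hhalf : (1 / 2 : ℝ) ^ n / x = 1 / (2 ^ n * x) := by rw [one_div_pow, div_div]
  rw [hhalf] at hsmall
  have hδn : packingDefect l (2 ^ n * x) ≤ 2 ^ n * (c / 2 * (x * h (1 / x))) :=
    calc packingDefect l (2 ^ n * x) ≤ C * (2 ^ n * x * h (1 / (2 ^ n * x))) := hδnx.2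
      _ ≤ C * (2 ^ n * x * (c / (2 * C) * h (1 / x))) := by gcongr
      _ = 2 ^ n * (c / 2 * (x * h (1 / x))) := by field_simp
  have hJ : (0 : ℝ) ≤ stringCount l (1 / (2 ^ (n + 1) * x)) := Nat.cast_nonneg _
  have h2n : (0 : ℝ) < 2 ^ n := by positivity
  nlinarith [pow_two_mul_packingDefect_le hl hsum n hx, hδx.1]

lemma exists_mul_le_stringCount (hl : ∀ j, 0 ≤ l j) (hsum : Summable l) (hρ : 0 < ρ)
    (hpos : ∀ y > 0, 0 < h y)
    (hrv : ∀ t > 0, Tendsto (fun y => h (t * y) / h y) (𝓝[>] 0) (𝓝 (t ^ ρ)))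
    {c C : ℝ} (hc : 0 < c) (hC : 0 < C)
    (hδ : ∀ᶠ x in atTop,
      c * (x * h (1 / x)) ≤ packingDefect l x ∧ packingDefect l x ≤ C * (x * h (1 / x))) :
    ∃ c' > 0, ∀ᶠ x in atTop, c' * (x * h (1 / x)) ≤ stringCount l (1 / x) := by
  obtain ⟨n, hn⟩ := exists_eventually_mul_le_stringCount_pow hl hsum hρ hpos hrv hc hC hδ
  set s : ℝ := 2 ^ (n + 1)
  have hs : 1 < s := one_lt_pow₀ one_lt_two n.succ_ne_zero
  refine ⟨c / 2 / s, by positivity, ?_⟩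
  filter_upwards [(tendsto_id.atTop_div_const (by positivity : 0 < s)).eventually hn,
    eventually_mul_le_of_tendsto_ratio hpos (hrv s (by positivity)) (Real.one_lt_rpow hs hρ),
    eventually_gt_atTop 0] with x hx hgrow hx0
  rw [id, mul_div_cancel₀ _ (by positivity), one_div_div] at hx
  calc c / 2 / s * (x * h (1 / x)) = c / 2 * (x / s * (1 * h (1 / x))) := by ring
    _ ≤ c / 2 * (x / s * h (s / x)) := by gcongr
    _ ≤ stringCount l (1 / x) := hx

lemma exists_stringCount_le_mul (hl : ∀ j, 0 ≤ l j) (hsum : Summable l) (hρ : ρ < 1)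
    (hpos : ∀ y > 0, 0 < h y)
    (hrv : ∀ t > 0, Tendsto (fun y => h (t * y) / h y) (𝓝[>] 0) (𝓝 (t ^ ρ)))
    {y₁ : ℝ} (hy₁ : 0 < y₁) (hcont : ContinuousOn h (Ioc 0 y₁)) {C : ℝ} (hC : 0 < C)
    (hδ : ∀ᶠ x in atTop, packingDefect l x ≤ C * (x * h (1 / x))) :
    ∃ C' > 0, ∀ᶠ x in atTop, (stringCount l (1 / x) : ℝ) ≤ C' * (x * h (1 / x)) := by
  obtain ⟨A, hA, hA2⟩ :=
    exists_between (Real.rpow_lt_self_of_one_lt one_lt_two hρ : (2 : ℝ) ^ ρ < 2)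
  have h4 : (4 : ℝ) ^ ρ < 4 := Real.rpow_lt_self_of_one_lt (by norm_num) hρ
  obtain ⟨X, hX⟩ := eventually_atTop.1 <| hδ.and <|
    (eventually_le_mul_of_tendsto_ratio hpos (hrv 2 two_pos) hA).and <|
    (eventually_le_mul_of_tendsto_ratio hpos (hrv 4 four_pos) h4).and
    (eventually_ge_atTop (1 / y₁))
  have hX₀ : 0 < X := (by positivity : 0 < 1 / y₁).trans_le (hX X le_rfl).2.2.2
  set f := fun x => x * h (1 / x)
  have hf₀ : ∀ x > 0, 0 < f x := fun x hx => mul_pos hx (hpos _ (by positivity))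
  have hfcont : ContinuousOn f (Icc (4 * X) (2 * (4 * X))) := by
    refine continuousOn_id.mul (hcont.comp (continuousOn_const.div continuousOn_id
      fun x hx => by linarith [hx.1]) fun x hx => ⟨one_div_pos.2 (by linarith [hx.1]), ?_⟩)
    exact (one_div_le (by linarith [hx.1]) hy₁).2 (by linarith [(hX X le_rfl).2.2.2, hx.1])
  obtain ⟨x₀, hx₀, hmin⟩ :=
    isCompact_Icc.exists_isMinOn (nonempty_Icc.2 (by linarith)) hfcont
  have hanti : ∀ x ∈ Icc (4 * X) (2 * (4 * X)),
      (stringCount l (1 / x) : ℝ) ≤ stringCount l (1 / (2 * (4 * X))) := fun x hx => by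
    exact_mod_cast stringCount_le_of_le hsum.tendsto_atTop_zero (by positivity)
      (one_div_le_one_div_of_le (by linarith [hx.1]) hx.2)
  have hstep : ∀ x, 2 * (4 * X) < x →
      (stringCount l (1 / x) : ℝ) ≤ 4 * C * f x + stringCount l (1 / (x / 2)) := fun x hx => by
    have hδx := (hX (x / 4) (by linarith)).1
    have h4x := (hX x (by linarith)).2.2.1
    rw [one_div_div] at hδx
    calc (stringCount l (1 / x) : ℝ)
        ≤ 4 * packingDefect l (x / 4) + stringCount l (1 / (x / 2)) :=
          stringCount_le_packingDefect_add hl hsum (by linarith)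
      _ ≤ 4 * (C * (x / 4 * (4 * h (1 / x)))) + stringCount l (1 / (x / 2)) := by
          gcongr
          exact hδx.trans (mul_le_mul_of_nonneg_left
            (mul_le_mul_of_nonneg_left h4x (by linarith)) hC.le)
      _ = 4 * C * f x + stringCount l (1 / (x / 2)) := by ring
  have hhalve : ∀ x, 2 * (4 * X) < x → f (x / 2) ≤ A / 2 * f x := fun x hx => by
    have h2x := (hX x (by linarith)).2.1
    calc f (x / 2) = x / 2 * h (2 / x) := by simp only [f, one_div_div]
      _ ≤ x / 2 * (A * h (1 / x)) := by gcongr; linarith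
      _ = A / 2 * f x := by ring
  obtain ⟨M, hM, hJ⟩ := exists_le_mul_of_dyadic_recursion (by positivity) (by positivity)
    (by linarith : A / 2 < 1) (hf₀ x₀ (by linarith [hx₀.1])) (fun x hx => hmin hx)
    (fun x hx => (hf₀ x (by linarith)).le) hanti hstep hhalve
  exact ⟨M, hM, eventually_atTop.2 ⟨4 * X, hJ⟩⟩

end Bounds

theorem statement18_general (D : ℝ) (hD : D ∈ Set.Ioo (0:ℝ) 1)
    (h : ℝ → ℝ) (hpos : ∀ y > 0, 0 < h y) (hsv : SmoothVaryAtZero h (1 - D))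
    (l : ℕ → ℝ) (hlpos : ∀ j, 0 < l j) (hlsum : Summable l)
    (hδ : ∃ c C : ℝ, 0 < c ∧ 0 < C ∧ ∀ᶠ x in atTop,
      c * (x * h (1 / x)) ≤ (∑' j : ℕ, Int.fract (l j * x)) ∧
        (∑' j : ℕ, Int.fract (l j * x)) ≤ C * (x * h (1 / x))) :
    ∃ c C : ℝ, 0 < c ∧ 0 < C ∧ ∀ᶠ x in atTop,
      c * (x * h (1 / x)) ≤ (Set.ncard {j : ℕ | 1 / x < l j} : ℝ) ∧
        (Set.ncard {j : ℕ | 1 / x < l j} : ℝ) ≤ C * (x * h (1 / x)) := by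
  obtain ⟨c, C, hc, hC, hδ⟩ := hδ
  obtain ⟨⟨-, hrv⟩, y₁, hy₁, hsmooth⟩ := hsv
  have hl : ∀ j, 0 ≤ l j := fun j => (hlpos j).le
  obtain ⟨c', hc', hlower⟩ :=
    exists_mul_le_stringCount hl hlsum (by linarith [hD.2]) hpos hrv hc hC hδ
  obtain ⟨C', hC', hupper⟩ := exists_stringCount_le_mul hl hlsum (by linarith [hD.1]) hpos hrv
    hy₁ hsmooth.continuousOn hC (hδ.mono fun _ hx => hx.2)
  exact ⟨c', C', hc', hC', hlower.and hupper⟩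

/-- For a fractal string `(l_j)` whose packing defect `δ(x) = ∑_j {l_j x}` satisfies
`δ(x) ≍ f(x) = x·h(1/x)` as `x → ∞` (with `h ∈ SR_{1-D}`, `D ∈ (0,1)`), the string
counting function `J(ε) = #{j : l_j > ε}` satisfies `J(1/x) ≍ f(x)` as `x → ∞`. -/
theorem statement18 (D : ℝ) (hD : D ∈ Set.Ioo (0:ℝ) 1)
    (h : ℝ → ℝ) (hpos : ∀ y > 0, 0 < h y) (hsv : SmoothVaryAtZero h (1 - D))
    (l : ℕ → ℝ) (hlpos : ∀ j, 0 < l j) (hlmono : Antitone l) (hlsum : Summable l)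
    (hδ : ∃ c C : ℝ, 0 < c ∧ 0 < C ∧ ∀ᶠ x in atTop,
      c * (x * h (1 / x)) ≤ (∑' j : ℕ, Int.fract (l j * x)) ∧
        (∑' j : ℕ, Int.fract (l j * x)) ≤ C * (x * h (1 / x))) :
    ∃ c C : ℝ, 0 < c ∧ 0 < C ∧ ∀ᶠ x in atTop,
      c * (x * h (1 / x)) ≤ (Set.ncard {j : ℕ | 1 / x < l j} : ℝ) ∧
        (Set.ncard {j : ℕ | 1 / x < l j} : ℝ) ≤ C * (x * h (1 / x)) :=
  statement18_general D hD h hpos hsv l hlpos hlsum hδ
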